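/- arXiv:2511.04345 — 2 statements merged into one kernel-verified Lean document; each statement's English description precedes it below -/
import Mathlib

section
/- Let G be an (s,t)-layered graph, P* a next-to-shortest s-to-t path with back-edge decomposition (A,B; P*_1, P*_0, P*_2), and suppose u is an internal vertex of P*_0 with d(s,u) ≤ d(s,B). Then the walk W obtained by concatenating a forward path from s to u, the subpath of P*_0 from u to B, and P*_2 is a simple s-to-t path with w(W) > d(s,t) and w(W) < w(P*), contradicting minimality of P*. Hence every internal vertex u of P*_0 satisfies d(s,u) > d(s,B). -/
variable {V : Type*}

/-- Total weight of a walk given as a list of vertices. -/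
def walkWt (w : V → V → ℝ) : List V → ℝ
  | [] => 0
  | [_] => 0
  | a :: b :: rest => w a b + walkWt w (b :: rest)

/-- The list of (directed) edges traversed by a walk. -/
def listEdges : List V → List (V × V)
  | [] => []
  | [_] => []
  | a :: b :: rest => (a, b) :: listEdges (b :: rest)

/-- `l` is a walk from `u` to `v` in the digraph with edge relation `E`. -/
def IsWalkFrom (E : V → V → Prop) (u v : V) (l : List V) : Prop :=
  l.Chain' E ∧ l.head? = some u ∧ l.getLast? = some v

/-- `l` is a (simple) path from `u` to `v`. -/
def IsPathFrom (E : V → V → Prop) (u v : V) (l : List V) : Prop :=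
  IsWalkFrom E u v l ∧ l.Nodup

/-- `d` is the shortest-path distance function of `(E, w)`: it lower-bounds the weight of
every path, and is achieved by some path whenever some path exists. -/
def IsDistFn (E : V → V → Prop) (w : V → V → ℝ) (d : V → V → ℝ) : Prop :=
  (∀ u v l, IsPathFrom E u v l → d u v ≤ walkWt w l) ∧
  (∀ u v, (∃ l, IsPathFrom E u v l) → ∃ l, IsPathFrom E u v l ∧ walkWt w l = d u v)

/-- All edge weights are (strictly) positive. -/
def PosWeights (E : V → V → Prop) (w : V → V → ℝ) : Prop :=
  ∀ u v, E u v → 0 < w u v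

/-- A back-edge relative to source `s`: `d(s,u) + w(u,v) > d(s,v)`. -/
def IsBackEdge (E : V → V → Prop) (w : V → V → ℝ) (d : V → V → ℝ) (s : V) (p : V × V) : Prop :=
  E p.1 p.2 ∧ d s p.2 < d s p.1 + w p.1 p.2

/-- A forward-edge relative to source `s`: `d(s,u) + w(u,v) = d(s,v)`. -/
def IsForwardEdge (E : V → V → Prop) (w : V → V → ℝ) (d : V → V → ℝ) (s : V) (p : V × V) : Prop :=
  E p.1 p.2 ∧ d s p.1 + w p.1 p.2 = d s p.2

/-- A forward path: all its edges are forward-edges. -/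
def IsForwardPath (E : V → V → Prop) (w : V → V → ℝ) (d : V → V → ℝ) (s : V) (l : List V) : Prop :=
  ∀ p ∈ listEdges l, IsForwardEdge E w d s p

/-- `(s,t)`-straight graph: every vertex lies on a shortest `s → t` path. -/
def IsStraight (E : V → V → Prop) (w : V → V → ℝ) (d : V → V → ℝ) (s t : V) : Prop :=
  (∀ u, d s u + d u t = d s t) ∧
  (∀ u, ∃ l, IsPathFrom E s t l ∧ u ∈ l ∧ walkWt w l = d s t)

/-- `(s,t)`-layered graph. -/
def IsLayered (E : V → V → Prop) (w : V → V → ℝ) (d : V → V → ℝ) (s t : V) : Prop :=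
  IsStraight E w d s t ∧
  (∀ u v, E u v → d s u ≠ d s v) ∧
  (∀ u v, E u v → d s u < d s v → ∀ x, d s x ≤ d s u ∨ d s u + w u v ≤ d s x)

/-- The layer of `u`: the rank of `d(s,u)` among the distinct values of `d(s,·)`. -/
noncomputable def layer [Fintype V] (d : V → V → ℝ) (s : V) (u : V) : ℕ :=
  ((Finset.univ.image (fun x : V => d s x)).filter (fun p => p ≤ d s u)).card

/-- An `s → t` not-shortest path. -/
def IsNotShortest (E : V → V → Prop) (w : V → V → ℝ) (d : V → V → ℝ) (s t : V)
    (l : List V) : Prop :=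
  IsPathFrom E s t l ∧ d s t < walkWt w l

/-- An `s → t` next-to-shortest path: a not-shortest path of minimum weight. -/
def IsNextToShortest (E : V → V → Prop) (w : V → V → ℝ) (d : V → V → ℝ) (s t : V)
    (l : List V) : Prop :=
  IsNotShortest E w d s t l ∧ ∀ l', IsNotShortest E w d s t l' → walkWt w l ≤ walkWt w l'

/-- Back-edge decomposition of a path `l = l1 ∘ l0 ∘ l2`, where `l0` runs from `A` to `B`,
starting with the first back-edge of `l` and ending with the last one. -/
def IsBEDecomp (E : V → V → Prop) (w : V → V → ℝ) (d : V → V → ℝ) (s t : V)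
    (l l1 l0 l2 : List V) (A B : V) : Prop :=
  IsPathFrom E s A l1 ∧ IsPathFrom E A B l0 ∧ IsPathFrom E B t l2 ∧
  l = l1 ++ l0.tail ++ l2.tail ∧
  (∀ p ∈ listEdges l1, ¬ IsBackEdge E w d s p) ∧
  (∀ p ∈ listEdges l2, ¬ IsBackEdge E w d s p) ∧
  (∃ p, (listEdges l0).head? = some p ∧ IsBackEdge E w d s p) ∧
  (∃ p, (listEdges l0).getLast? = some p ∧ IsBackEdge E w d s p)

/-!
Let `v` be the first vertex of the forward path `F` on `u :: l0b`. Following `F` up to `v`,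
then `P*_0` from `v` to `B`, then `P*_2` gives a simple `s → t` path `W`: the vertices taken from
`F` have distance at most `d(s,B)`, whereas those of `P*_2` after `B` lie strictly further out.
Measured by reduced costs `d(s,x) + w(x,y) - d(s,y)` (zero on forward edges, positive on
back-edges, nonnegative everywhere), `W` is strictly lighter than `P*`, since it drops the first
back-edge, and still longer than `d(s,t)`, since it keeps the last one. This contradicts the
minimality of `P*`, so no such `u` exists and both conclusions hold vacuously.
-/

section Walks

variable {α : Type*}

theorem length_listEdges : ∀ l : List α, (listEdges l).length = l.length - 1
  | [] | [_] => rfl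
  | _ :: b :: l => by simp [listEdges, length_listEdges (b :: l)]

theorem isChain_iff_forall_mem_listEdges {R : α → α → Prop} :
    ∀ l : List α, l.IsChain R ↔ ∀ p ∈ listEdges l, R p.1 p.2
  | [] | [_] => by simp [listEdges]
  | a :: b :: l => by simp [listEdges, isChain_iff_forall_mem_listEdges (b :: l)]

theorem listEdges_append_tail {b : α} {l' : List α} (hl' : l'.head? = some b) :
    ∀ {l : List α}, l.getLast? = some b → listEdges (l ++ l'.tail) = listEdges l ++ listEdges l'
  | [], h => by simp at h
  | [a], h => by
    obtain ⟨r, rfl⟩ := List.head?_eq_some_iff.mp hl'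
    obtain rfl : a = b := by simpa using h
    rfl
  | a :: c :: l, h => by
    rw [List.getLast?_cons_cons] at h
    simp only [List.cons_append, listEdges] at *
    rw [← List.cons_append, listEdges_append_tail hl' h]

theorem walkWt_append_tail (w : α → α → ℝ) {b : α} {l' : List α} (hl' : l'.head? = some b) :
    ∀ {l : List α}, l.getLast? = some b → walkWt w (l ++ l'.tail) = walkWt w l + walkWt w l'
  | [], h => by simp at h
  | [a], h => by
    obtain ⟨r, rfl⟩ := List.head?_eq_some_iff.mp hl'
    obtain rfl : a = b := by simpa using h
    simp [walkWt]
  | a :: c :: l, h => by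
    rw [List.getLast?_cons_cons] at h
    simp only [List.cons_append, walkWt] at *
    rw [← List.cons_append, walkWt_append_tail w hl' h, add_assoc]

theorem listEdges_append_cons (l₁ l₂ : List α) (x : α) :
    listEdges (l₁ ++ x :: l₂) = listEdges (l₁ ++ [x]) ++ listEdges (x :: l₂) := by
  simpa using listEdges_append_tail (l := l₁ ++ [x]) (l' := x :: l₂) rfl (by simp)

theorem walkWt_append_cons (w : α → α → ℝ) (l₁ l₂ : List α) (x : α) :
    walkWt w (l₁ ++ x :: l₂) = walkWt w (l₁ ++ [x]) + walkWt w (x :: l₂) := by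
  simpa using walkWt_append_tail w (l := l₁ ++ [x]) (l' := x :: l₂) rfl (by simp)

theorem mem_listEdges_of_head?_append_cons {l₁ l₂ : List α} {x : α} {p : α × α}
    (hl₁ : l₁ ≠ []) (hp : (listEdges (l₁ ++ x :: l₂)).head? = some p) :
    p ∈ listEdges (l₁ ++ [x]) := by
  have hne : listEdges (l₁ ++ [x]) ≠ [] :=
    List.ne_nil_of_length_pos (by simp [length_listEdges, List.length_pos_iff.mpr hl₁])
  rw [listEdges_append_cons, List.head?_append_of_ne_nil _ hne] at hp
  exact List.mem_of_mem_head? hp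

theorem mem_listEdges_of_getLast?_append_cons {l₁ l₂ : List α} {x : α} {p : α × α}
    (hl₂ : l₂ ≠ []) (hp : (listEdges (l₁ ++ x :: l₂)).getLast? = some p) :
    p ∈ listEdges (x :: l₂) := by
  have hne : listEdges (x :: l₂) ≠ [] :=
    List.ne_nil_of_length_pos (by simp [length_listEdges, List.length_pos_iff.mpr hl₂])
  rw [listEdges_append_cons, List.getLast?_append_of_ne_nil _ hne] at hp
  exact List.mem_of_getLast? hp

theorem walkWt_nonneg {w : α → α → ℝ} :
    ∀ {l : List α}, (∀ p ∈ listEdges l, 0 ≤ w p.1 p.2) → 0 ≤ walkWt w l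
  | [], _ | [_], _ => le_rfl
  | a :: b :: l, h => by
    simp only [listEdges, List.mem_cons, forall_eq_or_imp] at h
    exact add_nonneg h.1 (walkWt_nonneg h.2)

def reducedCost (w : α → α → ℝ) (φ : α → ℝ) (p : α × α) : ℝ :=
  φ p.1 + w p.1 p.2 - φ p.2

theorem walkWt_add_eq_add_sum_reducedCost (w : α → α → ℝ) (φ : α → ℝ) :
    ∀ {l : List α} {a b : α}, l.head? = some a → l.getLast? = some b →
      walkWt w l + φ a = φ b + ((listEdges l).map (reducedCost w φ)).sum
  | [], _, _, ha, _ => by simp at ha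
  | [x], a, b, ha, hb => by
    obtain rfl : x = a := by simpa using ha
    obtain rfl : x = b := by simpa using hb
    simp [walkWt, listEdges]
  | x :: y :: l, a, b, ha, hb => by
    obtain rfl : x = a := by simpa using ha
    rw [List.getLast?_cons_cons] at hb
    have ih := walkWt_add_eq_add_sum_reducedCost w φ (l := y :: l) rfl hb
    simp only [walkWt, listEdges, List.map_cons, List.sum_cons, reducedCost] at ih ⊢
    linarith

variable {w : α → α → ℝ} {φ : α → ℝ} {l : List α} {a b : α}

theorem sub_le_walkWt (ha : l.head? = some a) (hb : l.getLast? = some b)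
    (h : ∀ p ∈ listEdges l, 0 ≤ reducedCost w φ p) : φ b - φ a ≤ walkWt w l := by
  have := List.sum_nonneg (l := (listEdges l).map (reducedCost w φ)) (List.forall_mem_map.mpr h)
  linarith [walkWt_add_eq_add_sum_reducedCost w φ ha hb]

theorem sub_lt_walkWt (ha : l.head? = some a) (hb : l.getLast? = some b)
    (h : ∀ p ∈ listEdges l, 0 ≤ reducedCost w φ p)
    (hlt : ∃ p ∈ listEdges l, 0 < reducedCost w φ p) : φ b - φ a < walkWt w l := by
  obtain ⟨p, hp, hpos⟩ := hlt
  have := List.single_le_sum (l := (listEdges l).map (reducedCost w φ)) (List.forall_mem_map.mpr h) _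
    (List.mem_map_of_mem hp)
  linarith [walkWt_add_eq_add_sum_reducedCost w φ ha hb]

theorem walkWt_eq_sub (ha : l.head? = some a) (hb : l.getLast? = some b)
    (h : ∀ p ∈ listEdges l, reducedCost w φ p = 0) : walkWt w l = φ b - φ a := by
  have := List.sum_eq_zero (l := (listEdges l).map (reducedCost w φ)) (List.forall_mem_map.mpr h)
  linarith [walkWt_add_eq_add_sum_reducedCost w φ ha hb]

theorem exists_eq_append_cons_of_mem_of_mem {S l : List α} {x : α} (hx : x ∈ l) (hxS : x ∈ S) :
    ∃ l₁ v l₂, l = l₁ ++ v :: l₂ ∧ v ∈ S ∧ l₁.Disjoint S := by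
  classical
  obtain ⟨v, hv⟩ := Option.isSome_iff_exists.mp
    (List.find?_isSome.mpr ⟨x, hx, by simpa using hxS⟩ : (l.find? (· ∈ S)).isSome)
  obtain ⟨hvS, l₁, l₂, rfl, hl₁⟩ := List.find?_eq_some_iff_append.mp hv
  exact ⟨l₁, v, l₂, rfl, by simpa using hvS, fun a ha haS => by simpa [haS] using hl₁ a ha⟩

end Walks

section Paths

variable {α : Type*} {E : α → α → Prop} {a b c x : α} {l l' l₁ l₂ : List α}

theorem IsWalkFrom.append_tail (h : IsWalkFrom E a b l) (h' : IsWalkFrom E b c l') :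
    IsWalkFrom E a c (l ++ l'.tail) := by
  obtain ⟨hch, ha, hb⟩ := h
  obtain ⟨hch', hb', hc⟩ := h'
  obtain ⟨r, rfl⟩ := List.head?_eq_some_iff.mp hb'
  have hl : l ≠ [] := by rintro rfl; simp at ha
  refine ⟨List.isChain_append.mpr ⟨hch, hch'.tail, ?_⟩,
    by rwa [List.head?_append_of_ne_nil _ hl], ?_⟩
  · intro x hx y hy
    obtain rfl : x = b := by simpa [hb] using hx.symm
    exact (List.isChain_cons.mp hch').1 y hy
  · rcases r with _ | ⟨y, r⟩
    · obtain rfl : b = c := by simpa using hc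
      simpa using hb
    · rwa [List.tail_cons, List.getLast?_append_of_ne_nil _ (List.cons_ne_nil _ _),
        ← List.getLast?_cons_cons]

theorem IsPathFrom.append_tail (h : IsPathFrom E a b l) (h' : IsPathFrom E b c l')
    (hdisj : l.Disjoint l'.tail) : IsPathFrom E a c (l ++ l'.tail) :=
  ⟨h.1.append_tail h'.1, List.nodup_append.mpr
    ⟨h.2, h'.2.sublist (List.tail_sublist _), fun _ hx _ hy hxy => hdisj hx (hxy ▸ hy)⟩⟩

theorem IsPathFrom.prefix (h : IsPathFrom E a b (l₁ ++ x :: l₂)) :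
    IsPathFrom E a x (l₁ ++ [x]) := by
  obtain ⟨⟨hch, ha, -⟩, hnd⟩ := h
  rw [List.append_cons] at hch hnd
  refine ⟨⟨(List.isChain_append.mp hch).1, ?_, by simp⟩, (List.nodup_append.mp hnd).1⟩
  cases l₁ <;> simpa using ha

theorem IsPathFrom.suffix (h : IsPathFrom E a b (l₁ ++ x :: l₂)) :
    IsPathFrom E x b (x :: l₂) := by
  obtain ⟨⟨hch, -, hb⟩, hnd⟩ := h
  exact ⟨⟨hch.suffix (List.suffix_append _ _), rfl,
    by rwa [List.getLast?_append_of_ne_nil _ (List.cons_ne_nil _ _)] at hb⟩,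
    hnd.sublist (List.sublist_append_right _ _)⟩

end Paths

section Distances

variable {E : V → V → Prop} {w d : V → V → ℝ} {s t a b x y : V} {l : List V}

theorem IsStraight.dist_self (h : IsStraight E w d s t) : d s s = 0 := by
  linarith [h.1 s]

theorem IsStraight.exists_isPathFrom (h : IsStraight E w d s t) (x : V) :
    ∃ l, IsPathFrom E s x l := by
  obtain ⟨l, hl, hx, -⟩ := h.2 x
  obtain ⟨l₁, l₂, rfl⟩ := List.append_of_mem hx
  exact ⟨_, hl.prefix⟩

theorem IsDistFn.le_add_of_adj (hd : IsDistFn E w d) (hw : ∀ x y, E x y → 0 ≤ w x y)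
    (hx : ∃ l, IsPathFrom E a x l) (hxy : E x y) : d a y ≤ d a x + w x y := by
  obtain ⟨P, hP, hPw⟩ := hd.2 a x hx
  by_cases hyP : y ∈ P
  · obtain ⟨P₁, P₂, rfl⟩ := List.append_of_mem hyP
    have hwP := walkWt_append_cons w P₁ P₂ y
    have hsuffix := walkWt_nonneg (w := w) (l := y :: P₂) fun p hp =>
      hw _ _ ((isChain_iff_forall_mem_listEdges _).mp hP.suffix.1.1 p hp)
    linarith [hd.1 a y _ hP.prefix, hw x y hxy]
  · have hx : x ∈ P := List.mem_of_getLast? hP.1.2.2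
    have hxy' : IsPathFrom E x y [x, y] :=
      ⟨⟨List.isChain_pair.mpr hxy, rfl, rfl⟩, by simpa using fun h : x = y => hyP (h ▸ hx)⟩
    have := hd.1 a y _ (hP.append_tail hxy' (by simpa using hyP))
    rw [walkWt_append_tail w rfl hP.1.2.2] at this
    simp only [walkWt] at this
    linarith

theorem reducedCost_nonneg_of_isWalkFrom (htri : ∀ x y, E x y → d s y ≤ d s x + w x y)
    (hl : IsWalkFrom E a b l) : ∀ p ∈ listEdges l, 0 ≤ reducedCost w (d s) p := fun p hp => by
  have := htri _ _ ((isChain_iff_forall_mem_listEdges l).mp hl.1 p hp)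
  unfold reducedCost
  linarith

theorem IsBackEdge.reducedCost_pos {p : V × V} (h : IsBackEdge E w d s p) :
    0 < reducedCost w (d s) p := by
  unfold reducedCost
  linarith [h.2]

theorem IsForwardPath.reducedCost_eq_zero (h : IsForwardPath E w d s l) :
    ∀ p ∈ listEdges l, reducedCost w (d s) p = 0 := fun p hp => by
  unfold reducedCost
  linarith [(h p hp).2]

theorem isForwardPath_of_forall_not_isBackEdge (htri : ∀ x y, E x y → d s y ≤ d s x + w x y)
    (hl : l.IsChain E) (h : ∀ p ∈ listEdges l, ¬ IsBackEdge E w d s p) :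
    IsForwardPath E w d s l := fun p hp => by
  have hE := (isChain_iff_forall_mem_listEdges l).mp hl p hp
  have := htri _ _ hE
  exact ⟨hE, by_contra fun hne => h p hp ⟨hE, lt_of_le_of_ne this fun heq => hne heq.symm⟩⟩

theorem IsForwardPath.prefix {l₁ l₂ : List V} (h : IsForwardPath E w d s (l₁ ++ x :: l₂)) :
    IsForwardPath E w d s (l₁ ++ [x]) := fun p hp => h p <| by
  rw [listEdges_append_cons]
  exact List.mem_append_left _ hp

theorem IsForwardPath.pairwise_lt (hpos : PosWeights E w) (h : IsForwardPath E w d s l) :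
    l.Pairwise fun x y => d s x < d s y :=
  List.isChain_iff_pairwise.mp <| (isChain_iff_forall_mem_listEdges l).mpr fun p hp => by
    linarith [(h p hp).2, hpos _ _ (h p hp).1]

theorem IsForwardPath.dist_lt_of_mem_tail (hpos : PosWeights E w) (h : IsForwardPath E w d s l)
    (ha : l.head? = some a) (hx : x ∈ l.tail) : d s a < d s x := by
  obtain ⟨r, rfl⟩ := List.head?_eq_some_iff.mp ha
  exact List.rel_of_pairwise_cons (h.pairwise_lt hpos) hx

theorem IsForwardPath.dist_lt_of_mem (hpos : PosWeights E w) (h : IsForwardPath E w d s l)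
    (hb : l.getLast? = some b) (hx : x ∈ l) (hxb : x ≠ b) : d s x < d s b := by
  obtain ⟨r, rfl⟩ := List.getLast?_eq_some_iff.mp hb
  have hx : x ∈ r := by simpa [hxb] using hx
  exact (List.pairwise_append.mp (h.pairwise_lt hpos)).2.2 x hx b (by simp)

theorem IsForwardPath.dist_le_of_mem (hpos : PosWeights E w) (h : IsForwardPath E w d s l)
    (hb : l.getLast? = some b) (hx : x ∈ l) : d s x ≤ d s b := by
  rcases eq_or_ne x b with rfl | hxb
  · exact le_rfl
  · exact (h.dist_lt_of_mem hpos hb hx hxb).le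

end Distances

section NextToShortest

variable {E : V → V → Prop} {w d : V → V → ℝ} {s t A B v : V} {l l1 l0 l2 Q S G : List V}

theorem IsBEDecomp.isPathFrom_shortcut (hpos : PosWeights E w)
    (htri : ∀ x y, E x y → d s y ≤ d s x + w x y) (hdec : IsBEDecomp E w d s t l l1 l0 l2 A B)
    (hl : l.Nodup) (hsplit : l0 = Q ++ v :: S) (hQ : Q ≠ []) (hvd : d s v ≤ d s B)
    (hG : IsPathFrom E s v (G ++ [v])) (hGf : IsForwardPath E w d s (G ++ [v]))
    (hGS : G.Disjoint S) : IsPathFrom E s t (G ++ [v] ++ S ++ l2.tail) := by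
  obtain ⟨-, hl0, hl2, rfl, -, hl2nb, -⟩ := hdec
  subst hsplit
  have hl2f := isForwardPath_of_forall_not_isBackEdge htri hl2.1.1 hl2nb
  have hvS : v ∉ S := fun h => (List.nodup_cons.mp (List.nodup_middle.mp hl0.2)).1 (List.mem_append_right _ h)
  have hGv : (G ++ [v]).Disjoint S := fun x hx hxS => by
    rcases List.mem_append.mp hx with hx | hx
    · exact hGS hx hxS
    · exact hvS (List.mem_singleton.mp hx ▸ hxS)
  -- the shortcut stays at distance at most `d s B`, whereas `l2` leaves that range at once
  have hGl2 : (G ++ [v]).Disjoint l2.tail := fun x hx hx₂ =>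
    (hl2f.dist_lt_of_mem_tail hpos hl2.1.2.1 hx₂).not_ge
      ((hGf.dist_le_of_mem hpos hG.1.2.2 hx).trans hvd)
  have hSl2 : S.Disjoint l2.tail := fun x hx hx₂ => by
    obtain ⟨q, Q', rfl⟩ := List.exists_cons_of_ne_nil hQ
    exact List.disjoint_of_nodup_append hl (by simp [hx]) hx₂
  exact (hG.append_tail hl0.suffix hGv).append_tail hl2
    (List.disjoint_append_left.mpr ⟨hGl2, hSl2⟩)


theorem IsBEDecomp.not_isNextToShortest_of_shortcut (hpos : PosWeights E w) (hss : d s s = 0)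
    (htri : ∀ x y, E x y → d s y ≤ d s x + w x y) (hdec : IsBEDecomp E w d s t l l1 l0 l2 A B)
    (hsplit : l0 = Q ++ v :: S) (hQ : Q ≠ []) (hvB : v ≠ B) (hvd : d s v ≤ d s B)
    (hG : IsPathFrom E s v (G ++ [v])) (hGf : IsForwardPath E w d s (G ++ [v]))
    (hGS : G.Disjoint S) : ¬ IsNextToShortest E w d s t l := by
  rintro ⟨⟨hl, -⟩, hmin⟩
  have hW := hdec.isPathFrom_shortcut hpos htri hl.2 hsplit hQ hvd hG hGf hGS
  obtain ⟨hl1, hl0, hl2, rfl, -, -, ⟨p₁, hp₁, hp₁b⟩, ⟨p₂, hp₂, hp₂b⟩⟩ := hdec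
  subst hsplit
  have hS : S ≠ [] := by
    rintro rfl
    exact hvB (by simpa using hl0.1.2.2)
  have hP₀ : IsPathFrom E A v (Q ++ [v]) := hl0.prefix
  have hS₀ : IsPathFrom E v B (v :: S) := hl0.suffix
  have hGS₀ : IsWalkFrom E s B (G ++ [v] ++ S) := hG.1.append_tail hS₀.1
  have hwl : walkWt w (l1 ++ (Q ++ v :: S).tail ++ l2.tail) =
      walkWt w l1 + walkWt w (Q ++ [v]) + walkWt w (v :: S) + walkWt w l2 := by
    rw [walkWt_append_tail w hl2.1.2.1 (hl1.1.append_tail hl0.1).2.2,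
      walkWt_append_tail w hl0.1.2.1 hl1.1.2.2, walkWt_append_cons]
    ring
  have hwW : walkWt w (G ++ [v] ++ S ++ l2.tail) =
      walkWt w (G ++ [v]) + walkWt w (v :: S) + walkWt w l2 := by
    rw [walkWt_append_tail w hl2.1.2.1 hGS₀.2.2, ← List.append_cons, walkWt_append_cons]
  have hG_eq : walkWt w (G ++ [v]) = d s v - d s s :=
    walkWt_eq_sub hG.1.2.1 hG.1.2.2 hGf.reducedCost_eq_zero
  have hl1_ge : d s A - d s s ≤ walkWt w l1 :=
    sub_le_walkWt hl1.1.2.1 hl1.1.2.2 (reducedCost_nonneg_of_isWalkFrom htri hl1.1)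
  -- `Q ++ [v]` contains the first back-edge of `l`, which the shortcut avoids
  have hP₀_gt : d s v - d s A < walkWt w (Q ++ [v]) :=
    sub_lt_walkWt hP₀.1.2.1 hP₀.1.2.2 (reducedCost_nonneg_of_isWalkFrom htri hP₀.1)
      ⟨p₁, mem_listEdges_of_head?_append_cons hQ hp₁, hp₁b.reducedCost_pos⟩
  -- the shortcut still contains the last back-edge of `l`, so it is not shortest
  have hW_gt : d s t - d s s < walkWt w (G ++ [v] ++ S ++ l2.tail) := by
    refine sub_lt_walkWt hW.1.2.1 hW.1.2.2 (reducedCost_nonneg_of_isWalkFrom htri hW.1)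
      ⟨p₂, ?_, hp₂b.reducedCost_pos⟩
    rw [listEdges_append_tail hl2.1.2.1 hGS₀.2.2, ← List.append_cons, listEdges_append_cons]
    exact List.mem_append_left _ (List.mem_append_right _
      (mem_listEdges_of_getLast?_append_cons hS hp₂))
  have := hmin _ ⟨hW, by linarith⟩
  linarith

end NextToShortest

/-- for a next-to-shortest path with back-edge decomposition
`(A, B; l1, l0, l2)`, if an internal vertex `u` of `l0` had `d(s,u) ≤ d(s,B)` then the walk
`W = (forward path s → u) ∘ (l0 from u to B) ∘ l2` would be a simple `s → t` path with
`d(s,t) < w(W) < w(P*)`; hence every internal vertex of `l0` satisfies `d(s,u) > d(s,B)`. -/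
theorem stmt11 (E : V → V → Prop) (w d : V → V → ℝ) (s t A B u : V)
    (l l1 l0 l2 l0a l0b F : List V)
    (hpos : PosWeights E w) (hd : IsDistFn E w d)
    (hL : IsLayered E w d s t)
    (hP : IsNextToShortest E w d s t l)
    (hdec : IsBEDecomp E w d s t l l1 l0 l2 A B)
    (hsplit : l0 = l0a ++ u :: l0b)
    (huA : u ≠ A) (huB : u ≠ B)
    (hud : d s u ≤ d s B)
    (hF : IsPathFrom E s u F) (hFf : IsForwardPath E w d s F) :
    (IsPathFrom E s t (F ++ l0b ++ l2.tail) ∧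
      d s t < walkWt w (F ++ l0b ++ l2.tail) ∧
      walkWt w (F ++ l0b ++ l2.tail) < walkWt w l) ∧
    (∀ x ∈ l0, x ≠ A → x ≠ B → d s B < d s x) := by
  have htri : ∀ x y, E x y → d s y ≤ d s x + w x y := fun x y hxy =>
    hd.le_add_of_adj (fun _ _ h => (hpos _ _ h).le) (hL.1.exists_isPathFrom x) hxy
  -- `F` may meet `l0b`, so shortcut at the first vertex `v` of `F` lying on `u :: l0b`
  obtain ⟨G, v, G', rfl, hv, hGS⟩ :=
    exists_eq_append_cons_of_mem_of_mem (List.mem_of_getLast? hF.1.2.2) (List.mem_cons_self (l := l0b))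
  obtain ⟨Q, S, hQS⟩ := List.append_of_mem hv
  have hvd : d s v ≤ d s B ∧ v ≠ B := by
    rcases eq_or_ne v u with rfl | hvu
    · exact ⟨hud, huB⟩
    · have := hFf.dist_lt_of_mem hpos hF.1.2.2 (by simp) hvu
      exact ⟨by linarith, by rintro rfl; linarith⟩
  have hl0a : l0a ≠ [] := by
    rintro rfl
    exact huA (by simpa [hsplit] using hdec.2.1.1.2.1)
  exact (hdec.not_isNextToShortest_of_shortcut (Q := l0a ++ Q) (S := S) hpos hL.1.dist_self htri
    (by simp [hsplit, hQS]) (by simp [hl0a]) hvd.2 hvd.1 hF.prefix hFf.prefix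
    (fun x hx hxS => hGS hx (by simp [hQS, hxS])) hP).elim
end

section
/- Let G be an (s,t)-layered graph, and let P be an s-to-t walk formed by concatenating: a forward path from s to some vertex β, a subpath of an oracle middle path P*_0 from β to α where d(s,α) < d(s,β), and a forward path from α to t, such that the three pieces are pairwise internally disjoint. If d(s,B) < d(s,α) and d(s,β) < d(s,A), where A, B are the endpoints of P*_0, then P is a simple s-to-t path with d(s,t) < w(P) < d(s,A) + w(P*_0) + d(s,t) − d(s,B). -/
variable {V : Type*}

/-! The glued walk has weight `d(s,β) + w(mid) + d(s,t) - d(s,α)`, because forward paths have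
weight equal to the distance difference of their endpoints. As `d(s,α) < d(s,β)`, this exceeds
`d(s,t)`; as `mid` is a subpath of `l0` and `d(s,β) - d(s,α) < d(s,A) - d(s,B)`, it is below
`d(s,A) + w(l0) + d(s,t) - d(s,B)`. -/

section Walks

variable {E : V → V → Prop} {w d : V → V → ℝ}

@[simp]
lemma walkWt_cons_cons (a b : V) (r : List V) :
    walkWt w (a :: b :: r) = w a b + walkWt w (b :: r) := rfl

@[simp]
lemma listEdges_cons_cons (a b : V) (r : List V) :
    listEdges (a :: b :: r) = (a, b) :: listEdges (b :: r) := rfl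

lemma walkWt_append_tail_s15 {x : V} :
    ∀ l₁ l₂ : List V, l₁.getLast? = some x → l₂.head? = some x →
      walkWt w (l₁ ++ l₂.tail) = walkWt w l₁ + walkWt w l₂
  | [], _, h₁, _ => by simp at h₁
  | [_], [], _, h₂ => by simp at h₂
  | [a], c :: r, h₁, h₂ => by
      obtain rfl : a = x := by simpa using h₁
      obtain rfl : c = a := by simpa using h₂
      simp [walkWt]
  | a :: b :: r, l₂, h₁, h₂ => by
      rw [List.getLast?_cons_cons] at h₁
      simp only [List.cons_append, walkWt_cons_cons] at *
      rw [← List.cons_append, walkWt_append_tail_s15 (b :: r) l₂ h₁ h₂]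
      ring

lemma IsWalkFrom.append_tail_s15 {u x v : V} {l₁ l₂ : List V} (h₁ : IsWalkFrom E u x l₁)
    (h₂ : IsWalkFrom E x v l₂) : IsWalkFrom E u v (l₁ ++ l₂.tail) := by
  obtain ⟨c₁, hu, hx⟩ := h₁
  obtain ⟨c₂, hx', hv⟩ := h₂
  obtain ⟨r, rfl⟩ := List.head?_eq_some_iff.mp hx'
  refine ⟨?_, ?_, ?_⟩
  · rw [List.tail_cons]
    show (l₁ ++ r).IsChain E
    rw [List.isChain_append]
    refine ⟨c₁, (List.isChain_cons.mp c₂).2, fun y hy z hz => ?_⟩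
    rw [hx, Option.mem_some_iff] at hy
    exact hy ▸ (List.isChain_cons.mp c₂).1 z hz
  · cases l₁ <;> simp_all
  · rcases r with _ | ⟨b, r⟩
    · simpa [← Option.some_inj.mp hv] using hx
    · rw [List.tail_cons, List.getLast?_append_of_ne_nil _ (List.cons_ne_nil b r)]
      rwa [List.getLast?_cons_cons] at hv

lemma List.Nodup.append_tail_s15 {x : V} {l₁ l₂ : List V} (h₁ : l₁.Nodup) (h₂ : l₂.Nodup)
    (hx : l₂.head? = some x) (hdisj : ∀ y ∈ l₁, y ∈ l₂ → y = x) :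
    (l₁ ++ l₂.tail).Nodup := by
  obtain ⟨r, rfl⟩ := List.head?_eq_some_iff.mp hx
  obtain ⟨hxr, hr⟩ := List.nodup_cons.mp h₂
  refine List.nodup_append.mpr ⟨h₁, hr, fun y hy z hz hyz => ?_⟩
  subst hyz
  exact hxr (hdisj y hy (List.mem_cons_of_mem x hz) ▸ hz)

lemma IsPathFrom.append_tail_s15 {u x v : V} {l₁ l₂ : List V} (h₁ : IsPathFrom E u x l₁)
    (h₂ : IsPathFrom E x v l₂) (hdisj : ∀ y ∈ l₁, y ∈ l₂ → y = x) :
    IsPathFrom E u v (l₁ ++ l₂.tail) :=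
  ⟨h₁.1.append_tail_s15 h₂.1, h₁.2.append_tail_s15 h₂.2 h₂.1.2.1 hdisj⟩

lemma IsPathFrom.of_infix {u v x y : V} {l m : List V} (hl : IsPathFrom E u v l)
    (hm : m <:+: l) (hx : m.head? = some x) (hy : m.getLast? = some y) :
    IsPathFrom E x y m :=
  ⟨⟨hl.1.1.infix hm, hx, hy⟩, hl.2.sublist hm.sublist⟩

section Nonneg

variable (hw : ∀ u v, E u v → 0 ≤ w u v)
include hw

lemma walkWt_nonneg_s15 : ∀ l : List V, l.IsChain E → 0 ≤ walkWt w l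
  | [], _ => le_rfl
  | [_], _ => le_rfl
  | a :: b :: r, h => by
      obtain ⟨hab, hr⟩ := List.isChain_cons_cons.mp h
      rw [walkWt_cons_cons]
      linarith [hw a b hab, walkWt_nonneg_s15 (b :: r) hr]

lemma walkWt_le_cons (a : V) (l : List V) (h : (a :: l).IsChain E) :
    walkWt w l ≤ walkWt w (a :: l) := by
  rcases l with _ | ⟨b, r⟩
  · rfl
  · rw [walkWt_cons_cons]
    linarith [hw a b (List.isChain_cons_cons.mp h).1]

lemma walkWt_le_append_left (l : List V) :
    ∀ p : List V, (p ++ l).IsChain E → walkWt w l ≤ walkWt w (p ++ l)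
  | [], _ => le_rfl
  | a :: p, h =>
      (walkWt_le_append_left l p (List.isChain_cons.mp h).2).trans
        (walkWt_le_cons hw a (p ++ l) h)

lemma walkWt_le_append_right (q : List V) :
    ∀ l : List V, (l ++ q).IsChain E → walkWt w l ≤ walkWt w (l ++ q)
  | [], h => walkWt_nonneg_s15 hw q h
  | [_], h => walkWt_nonneg_s15 hw _ h
  | a :: b :: r, h => by
      have ih := walkWt_le_append_right q (b :: r) (List.isChain_cons.mp h).2
      simp only [List.cons_append, walkWt_cons_cons] at ih ⊢
      linarith

lemma walkWt_le_of_infix {m l : List V} (hm : m <:+: l) (hl : l.IsChain E) :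
    walkWt w m ≤ walkWt w l := by
  obtain ⟨p, q, rfl⟩ := hm
  rw [List.append_assoc] at hl ⊢
  calc walkWt w m ≤ walkWt w (m ++ q) :=
        walkWt_le_append_right hw q m (hl.suffix ⟨p, rfl⟩)
    _ ≤ walkWt w (p ++ (m ++ q)) := walkWt_le_append_left hw _ p hl

lemma IsDistFn.self_eq_zero (hd : IsDistFn E w d) (u : V) : d u u = 0 := by
  have hu : IsPathFrom E u u [u] := ⟨⟨List.isChain_singleton u, rfl, rfl⟩, List.nodup_singleton u⟩
  obtain ⟨l, hl, hwl⟩ := hd.2 u u ⟨[u], hu⟩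
  have := hd.1 u u [u] hu
  simp only [walkWt] at this
  linarith [walkWt_nonneg_s15 hw l hl.1.1]

end Nonneg

lemma IsForwardPath.walkWt_eq {s : V} :
    ∀ {l : List V} {u v : V}, IsForwardPath E w d s l → l.head? = some u →
      l.getLast? = some v → walkWt w l = d s v - d s u
  | [], _, _, _, hu, _ => by simp at hu
  | [a], _, _, _, hu, hv => by
      obtain rfl : a = _ := by simpa using hu
      obtain rfl : a = _ := by simpa using hv
      simp [walkWt]
  | a :: b :: r, u, v, hf, hu, hv => by
      obtain rfl : a = u := by simpa using hu
      rw [List.getLast?_cons_cons] at hv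
      have hab : d s a + w a b = d s b := (hf (a, b) (by simp)).2
      have hr : IsForwardPath E w d s (b :: r) := fun p hp => hf p (by simp [hp])
      rw [walkWt_cons_cons, hr.walkWt_eq rfl hv]
      linarith

end Walks

theorem stmt15_general (E : V → V → Prop) (w d : V → V → ℝ) (s t A B α β : V)
    (l0 mid F1 F2 : List V)
    (hpos : PosWeights E w) (hd : IsDistFn E w d)
    (horacle : ∃ l1 l2, IsNextToShortest E w d s t (l1 ++ l0.tail ++ l2.tail) ∧
      IsBEDecomp E w d s t (l1 ++ l0.tail ++ l2.tail) l1 l0 l2 A B)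
    (hmid : mid <:+: l0) (hmidh : mid.head? = some β) (hmidl : mid.getLast? = some α)
    (hF1 : IsPathFrom E s β F1) (hF1f : IsForwardPath E w d s F1)
    (hF2 : IsPathFrom E α t F2) (hF2f : IsForwardPath E w d s F2)
    (hint1 : ∀ x, x ∈ F1 → x ∈ mid → x = β)
    (hint2 : ∀ x, x ∈ mid → x ∈ F2 → x = α)
    (hint3 : ∀ x, x ∈ F1 → x ∈ F2 → False)
    (hαβ : d s α < d s β) (hBα : d s B < d s α) (hβA : d s β < d s A) :
    IsPathFrom E s t (F1 ++ mid.tail ++ F2.tail) ∧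
    d s t < walkWt w (F1 ++ mid.tail ++ F2.tail) ∧
    walkWt w (F1 ++ mid.tail ++ F2.tail) < d s A + walkWt w l0 + d s t - d s B := by
  obtain ⟨_, _, -, hbe⟩ := horacle
  have hw : ∀ u v, E u v → 0 ≤ w u v := fun u v h => (hpos u v h).le
  have hl0 : IsPathFrom E A B l0 := hbe.2.1
  have hmidP : IsPathFrom E β α mid := hl0.of_infix hmid hmidh hmidl
  have hP₁ := hF1.append_tail_s15 hmidP hint1
  have hP := hP₁.append_tail_s15 hF2 fun x hx hx₂ => by
    rcases List.mem_append.mp hx with hx₁ | hxm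
    · exact (hint3 x hx₁ hx₂).elim
    · exact hint2 x (List.mem_of_mem_tail hxm) hx₂
  have hwP : walkWt w (F1 ++ mid.tail ++ F2.tail)
      = (d s β - d s s) + walkWt w mid + (d s t - d s α) := by
    rw [walkWt_append_tail_s15 _ _ hP₁.1.2.2 hF2.1.2.1, walkWt_append_tail_s15 _ _ hF1.1.2.2 hmidh,
      hF1f.walkWt_eq hF1.1.2.1 hF1.1.2.2, hF2f.walkWt_eq hF2.1.2.1 hF2.1.2.2]
  have hss := hd.self_eq_zero hw s
  have hmid₀ := walkWt_nonneg_s15 hw mid hmidP.1.1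
  have hmidl0 := walkWt_le_of_infix hw hmid hl0.1.1
  exact ⟨hP, by linarith, by linarith⟩

/-- stitching a forward path `s → β`, a `β → α` subpath of an oracle middle
path `l0` (with `d(s,α) < d(s,β)`), and a forward path `α → t`, internally disjoint, gives a
simple `s → t` path `P` with `d(s,t) < w(P) < d(s,A) + w(l0) + d(s,t) − d(s,B)`. -/
theorem stmt15 (E : V → V → Prop) (w d : V → V → ℝ) (s t A B α β : V)
    (l0 mid F1 F2 : List V)
    (hpos : PosWeights E w) (hd : IsDistFn E w d)
    (hL : IsLayered E w d s t)
    (horacle : ∃ l1 l2, IsNextToShortest E w d s t (l1 ++ l0.tail ++ l2.tail) ∧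
      IsBEDecomp E w d s t (l1 ++ l0.tail ++ l2.tail) l1 l0 l2 A B)
    (hmid : mid <:+: l0) (hmidh : mid.head? = some β) (hmidl : mid.getLast? = some α)
    (hF1 : IsPathFrom E s β F1) (hF1f : IsForwardPath E w d s F1)
    (hF2 : IsPathFrom E α t F2) (hF2f : IsForwardPath E w d s F2)
    (hint1 : ∀ x, x ∈ F1 → x ∈ mid → x = β)
    (hint2 : ∀ x, x ∈ mid → x ∈ F2 → x = α)
    (hint3 : ∀ x, x ∈ F1 → x ∈ F2 → False)
    (hαβ : d s α < d s β) (hBα : d s B < d s α) (hβA : d s β < d s A) :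
    IsPathFrom E s t (F1 ++ mid.tail ++ F2.tail) ∧
    d s t < walkWt w (F1 ++ mid.tail ++ F2.tail) ∧
    walkWt w (F1 ++ mid.tail ++ F2.tail) < d s A + walkWt w l0 + d s t - d s B :=
  stmt15_general E w d s t A B α β l0 mid F1 F2 hpos hd horacle hmid hmidh hmidl hF1 hF1f hF2 hF2f
    hint1 hint2 hint3 hαβ hBα hβA
end
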